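/- Let C be a binary linear [k+1, k] code with systematic generator matrix G = [I_k | A] (so t = 1), and let a_1 = #{i : g^i_I = 1}. Then M(C) = k + C(a_1, 2), where C(a_1, 2) = a_1(a_1 - 1)/2. -/

import Mathlib

open Finset

/-- The support of a vector `x ∈ F_2^n`: the set of nonzero coordinates. -/
def supp {n : ℕ} (x : Fin n → ZMod 2) : Set (Fin n) := {i | x i ≠ 0}

/-- `c` is a minimal codeword of the linear code (subspace) `C ≤ F_2^n`:
it is a nonzero codeword and no nonzero codeword has support properly contained in `supp c`. -/
def IsMinimal {n : ℕ} (C : Submodule (ZMod 2) (Fin n → ZMod 2)) (c : Fin n → ZMod 2) : Prop :=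
  c ∈ C ∧ c ≠ 0 ∧ ∀ c' ∈ C, c' ≠ 0 → ¬ supp c' ⊂ supp c

/-- `M(C)`: the number of minimal codewords of `C`. -/
noncomputable def Mcode {n : ℕ} (C : Submodule (ZMod 2) (Fin n → ZMod 2)) : ℕ :=
  Set.ncard {c | IsMinimal C c}

/-- The `i`-th row `g^i` of the systematic generator matrix `G = [I_k | A]`. -/
def row {k t : ℕ} (A : Fin k → Fin t → ZMod 2) (i : Fin k) : Fin (k + t) → ZMod 2 :=
  Fin.append (Pi.single i 1) (A i)

/-- The binary linear `[k+t, k]` code with systematic generator matrix `G = [I_k | A]`. -/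
def genCode {k t : ℕ} (A : Fin k → Fin t → ZMod 2) :
    Submodule (ZMod 2) (Fin (k + t) → ZMod 2) :=
  Submodule.span (ZMod 2) (Set.range (row A))

/-- `c^S = ∑_{i ∈ S} g^i`. -/
def cS {k t : ℕ} (A : Fin k → Fin t → ZMod 2) (S : Finset (Fin k)) : Fin (k + t) → ZMod 2 :=
  ∑ i ∈ S, row A i

/-- `c_I`: the restriction of a codeword to its last `t` coordinates (the information bits). -/
def infoBits {k t : ℕ} (c : Fin (k + t) → ZMod 2) : Fin t → ZMod 2 :=
  fun j => c (Fin.natAdd k j)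

/-- `a_τ(A)` : the number of indices `i` with `g^i_I = A i = τ`. -/
def aCount {k t : ℕ} (A : Fin k → Fin t → ZMod 2) (τ : Fin t → ZMod 2) : ℕ :=
  (Finset.univ.filter fun i => A i = τ).card

/-- `M_2(n, k)`: the maximum of `M(C)` over all binary linear `[n, k]` codes `C`. -/
noncomputable def M2 (n k : ℕ) : ℕ :=
  sSup {m | ∃ C : Submodule (ZMod 2) (Fin n → ZMod 2),
    Module.finrank (ZMod 2) C = k ∧ Mcode C = m}

/-!
Every codeword of `genCode A` is `cS A S` for exactly one `S`, and its support is `S` together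
with the check position precisely when `∑ i ∈ S, A i` is nonzero. For `t = 1` this makes
`cS A S` minimal iff `S` is nonempty, has even weight, and every nonempty proper subset of `S`
has odd weight. A single index always qualifies; otherwise every index of `S` has weight one,
so any two of them already form an even subset, and `S` must be such a pair.
-/

lemma ZMod.two_ne_zero_iff_eq_one {a : ZMod 2} : a ≠ 0 ↔ a = 1 := by
  revert a; decide

section Systematic

variable {k t : ℕ} (A : Fin k → Fin t → ZMod 2)

lemma cS_castAdd (S : Finset (Fin k)) (j : Fin k) :
    cS A S (Fin.castAdd t j) = if j ∈ S then 1 else 0 := by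
  simp [cS, row, Finset.sum_apply, Pi.single_apply]

lemma castAdd_mem_supp_cS {S : Finset (Fin k)} {j : Fin k} :
    Fin.castAdd t j ∈ supp (cS A S) ↔ j ∈ S := by
  by_cases hj : j ∈ S <;> simp [supp, cS_castAdd, hj]

lemma natAdd_mem_supp_cS {S : Finset (Fin k)} {j : Fin t} :
    Fin.natAdd k j ∈ supp (cS A S) ↔ j ∈ supp (∑ i ∈ S, A i) := by
  simp [supp, cS, row, Finset.sum_apply]

lemma cS_injective : Function.Injective (cS A) := by
  intro S S' h
  ext j
  rw [← castAdd_mem_supp_cS A (t := t), h, castAdd_mem_supp_cS]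

lemma cS_eq_zero_iff {S : Finset (Fin k)} : cS A S = 0 ↔ S = ∅ := by
  rw [← cS_injective A |>.eq_iff, cS, cS, Finset.sum_empty]

lemma mem_genCode_iff {c : Fin (k + t) → ZMod 2} : c ∈ genCode A ↔ ∃ S, cS A S = c := by
  refine ⟨fun hc => ?_, ?_⟩
  · obtain ⟨f, rfl⟩ := (Submodule.mem_span_range_iff_exists_fun _).mp hc
    refine ⟨univ.filter fun i => f i = 1, ?_⟩
    rw [cS, Finset.sum_filter]
    refine Finset.sum_congr rfl fun i _ => ?_
    by_cases hf : f i = 1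
    · simp [hf]
    · simp [ZMod.two_ne_zero_iff_eq_one.not_right.mpr hf]
  · rintro ⟨S, rfl⟩
    exact Submodule.sum_mem _ fun i _ => Submodule.subset_span ⟨i, rfl⟩

lemma supp_cS_subset_iff {S S' : Finset (Fin k)} :
    supp (cS A S') ⊆ supp (cS A S) ↔
      S' ⊆ S ∧ supp (∑ i ∈ S', A i) ⊆ supp (∑ i ∈ S, A i) := by
  simp only [Set.subset_def, Fin.forall_fin_add, castAdd_mem_supp_cS, natAdd_mem_supp_cS]
  rfl

lemma supp_cS_ssubset_iff {S S' : Finset (Fin k)} :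
    supp (cS A S') ⊂ supp (cS A S) ↔
      S' ⊂ S ∧ supp (∑ i ∈ S', A i) ⊆ supp (∑ i ∈ S, A i) := by
  rw [Set.ssubset_def, Finset.ssubset_def, supp_cS_subset_iff, supp_cS_subset_iff]
  constructor
  · rintro ⟨⟨hS, hI⟩, hnot⟩
    refine ⟨⟨hS, fun hS' => hnot ⟨hS', ?_⟩⟩, hI⟩
    rw [Finset.Subset.antisymm hS hS']
  · rintro ⟨⟨hS, hnot⟩, hI⟩
    exact ⟨⟨hS, hI⟩, fun h => hnot h.1⟩

theorem isMinimal_cS_iff {S : Finset (Fin k)} :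
    IsMinimal (genCode A) (cS A S) ↔ S.Nonempty ∧ ∀ S' : Finset (Fin k), S'.Nonempty → S' ⊂ S →
      ¬ supp (∑ i ∈ S', A i) ⊆ supp (∑ i ∈ S, A i) := by
  simp only [IsMinimal, mem_genCode_iff, exists_apply_eq_apply, true_and, forall_exists_index,
    forall_apply_eq_imp_iff, ne_eq, cS_eq_zero_iff, ← Finset.nonempty_iff_ne_empty,
    supp_cS_ssubset_iff, not_and]

theorem mcode_genCode :
    Mcode (genCode A) = {S | IsMinimal (genCode A) (cS A S)}.ncard := by
  have hset : {c | IsMinimal (genCode A) c} = cS A '' {S | IsMinimal (genCode A) (cS A S)} := by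
    ext c
    refine ⟨fun hc => ?_, ?_⟩
    · obtain ⟨S, rfl⟩ := (mem_genCode_iff A).mp hc.1
      exact ⟨S, hc, rfl⟩
    · rintro ⟨S, hS, rfl⟩
      exact hS
  rw [Mcode, hset, Set.ncard_image_of_injective _ (cS_injective A)]

end Systematic

section ParityWeights

variable {α : Type*} (w : α → ZMod 2)

lemma sum_eq_card_of_forall_eq_one {P : Finset α} (h : ∀ i ∈ P, w i = 1) :
    ∑ i ∈ P, w i = P.card := by
  rw [Finset.sum_congr rfl h, Finset.sum_const, nsmul_one]

theorem nonempty_and_forall_ssubset_sum_ne_zero_iff {S : Finset α} :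
    (S.Nonempty ∧ ∀ S' : Finset α, S'.Nonempty → S' ⊂ S → ∑ i ∈ S', w i ≠ 0 ∧ ∑ i ∈ S, w i = 0) ↔
      S.card = 1 ∨ (S.card = 2 ∧ ∀ i ∈ S, w i = 1) := by
  constructor
  · rintro ⟨hne, h⟩
    refine or_iff_not_imp_left.mpr fun hcard => ?_
    have hone : ∀ i ∈ S, w i = 1 := fun i hi => by
      have hsub : {i} ⊂ S := Finset.ssubset_iff_subset_ne.mpr
        ⟨singleton_subset_iff.mpr hi, fun h => hcard (h ▸ card_singleton i)⟩
      simpa [ZMod.two_ne_zero_iff_eq_one] using (h {i} (singleton_nonempty i) hsub).1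
    refine ⟨?_, hone⟩
    by_contra h2
    obtain ⟨P, hPS, hP⟩ := exists_subset_card_eq (show 2 ≤ S.card by have := hne.card_pos; omega)
    have hsub : P ⊂ S := Finset.ssubset_iff_subset_ne.mpr ⟨hPS, fun h => h2 (h ▸ hP)⟩
    have hsum := (h P ((Finset.card_pos (s := P)).mp (by omega)) hsub).1
    rw [sum_eq_card_of_forall_eq_one w fun i hi => hone i (hPS hi), hP] at hsum
    exact hsum rfl
  · rintro (h1 | ⟨h2, hone⟩)
    · refine ⟨(Finset.card_pos (s := S)).mp (by omega), fun S' hS' hsub => ?_⟩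
      have := Finset.card_lt_card hsub
      have := hS'.card_pos
      omega
    · refine ⟨(Finset.card_pos (s := S)).mp (by omega), fun S' hS' hsub => ⟨?_, ?_⟩⟩
      · have hS'1 : S'.card = 1 := by
          have := Finset.card_lt_card hsub
          have := hS'.card_pos
          omega
        obtain ⟨i, rfl⟩ := Finset.card_eq_one.mp hS'1
        simp [hone i (hsub.subset (mem_singleton_self i))]
      · rw [sum_eq_card_of_forall_eq_one w hone, h2]
        rfl

theorem ncard_card_eq_one_or_two [Fintype α] [DecidableEq α] :
    {S : Finset α | S.card = 1 ∨ (S.card = 2 ∧ ∀ i ∈ S, w i = 1)}.ncard =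
      Fintype.card α + (univ.filter fun i => w i = 1).card.choose 2 := by
  have hset : {S : Finset α | S.card = 1 ∨ (S.card = 2 ∧ ∀ i ∈ S, w i = 1)} =
      ↑(univ.powersetCard 1 ∪ (univ.filter fun i => w i = 1).powersetCard 2) := by
    ext S
    simp [Finset.subset_iff, and_comm]
  rw [hset, Set.ncard_coe_finset, Finset.card_union_of_disjoint, Finset.card_powersetCard,
    Finset.card_powersetCard, Nat.choose_one_right, Finset.card_univ]
  exact Finset.disjoint_left.mpr fun S h1 h2 => by
    rw [Finset.mem_powersetCard] at h1 h2
    omega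

end ParityWeights

theorem stmt7 (k : ℕ) (A : Fin k → Fin 1 → ZMod 2) :
    Mcode (genCode A) = k + (aCount A 1).choose 2 := by
  have hmin (S : Finset (Fin k)) :
      IsMinimal (genCode A) (cS A S) ↔ S.card = 1 ∨ (S.card = 2 ∧ ∀ i ∈ S, A i 0 = 1) := by
    rw [isMinimal_cS_iff, ← nonempty_and_forall_ssubset_sum_ne_zero_iff]
    simp [supp, Set.subset_def, Fin.forall_fin_one, Finset.sum_apply]
  have haCount : aCount A 1 = (univ.filter fun i => A i 0 = 1).card := by
    simp [aCount, funext_iff, Fin.forall_fin_one]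
  simp_rw [mcode_genCode, hmin]
  rw [ncard_card_eq_one_or_two, Fintype.card_fin, haCount]
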